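/- arXiv:1009.1647 — 5 statements merged into one kernel-verified Lean document; each statement's English description precedes it below -/
import Mathlib

section
/- Let G be a group with a convergence group action on a compact metrizable space M with at least three points, and let H be a dynamically quasiconvex subgroup of G with |Λ(H)| ≥ 2. Then for any g ∈ G \ H, the inclusion gHg⁻¹ ⊆ H implies gHg⁻¹ = H. -/
open Pointwise Filter Topology Set

section ConvergenceGroups

variable (G M : Type*) [Group G] [TopologicalSpace M] [MulAction G M]

/-- A convergence group action: the action is by homeomorphisms (each element acts
continuously, hence as a homeomorphism since the action is by a group), and the induced
diagonal action on the space of distinct triples of points of `M` is properly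
discontinuous. -/
def IsConvergenceAction : Prop :=
  (∀ g : G, Continuous fun x : M => g • x) ∧
    ∀ K L : Set (M × M × M), IsCompact K → IsCompact L →
      (∀ t ∈ K ∪ L, t.1 ≠ t.2.1 ∧ t.1 ≠ t.2.2 ∧ t.2.1 ≠ t.2.2) →
      {g : G | ((g • K) ∩ L).Nonempty}.Finite

/-- The limit set of a subgroup `H ≤ G`: the set of accumulation points in `M` of
the `H`-orbits of points of `M`. -/
def limitSet (H : Subgroup G) : Set M :=
  {x : M | ∃ m : M, x ∈ closure (((fun h : G => h • m) '' (H : Set G)) \ {x})}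

/-- `z` is a conical limit point of the subgroup `H`. -/
def IsConicalLimitPoint (H : Subgroup G) (z : M) : Prop :=
  ∃ (h : ℕ → G) (a b : M), (∀ n, h n ∈ H) ∧ a ≠ b ∧
    Tendsto (fun n => h n • z) atTop (nhds a) ∧
    ∀ q : M, q ≠ z → Tendsto (fun n => h n • q) atTop (nhds b)

/-- `g` is loxodromic: it has infinite order and fixes exactly two points of `M`. -/
def IsLoxodromic (g : G) : Prop :=
  ¬ IsOfFinOrder g ∧ {x : M | g • x = x}.encard = 2

/-- `p` is a bounded parabolic point of the subgroup `H`: its stabilizer in `H` is an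
infinite subgroup containing no loxodromic element, which acts cocompactly on
`Λ(H) \ {p}`. -/
def IsBoundedParabolicPoint (H : Subgroup G) (p : M) : Prop :=
  ((H ⊓ MulAction.stabilizer G p : Subgroup G) : Set G).Infinite ∧
  (∀ g ∈ H ⊓ MulAction.stabilizer G p, ¬ IsLoxodromic G M g) ∧
  ∃ C : Set M, IsCompact C ∧ C ⊆ limitSet G M H \ {p} ∧
    limitSet G M H \ {p} ⊆ ⋃ g ∈ (H ⊓ MulAction.stabilizer G p : Subgroup G), g • C

/-- `H` is dynamically quasiconvex: for every pair of disjoint closed subsets `K, L` of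
`M`, the set of cosets `gH` with `gΛ(H)` meeting both `K` and `L` is finite. -/
def DynamicallyQuasiconvex (H : Subgroup G) : Prop :=
  ∀ K L : Set M, IsClosed K → IsClosed L → Disjoint K L →
    ((fun g : G => (g : G ⧸ H)) ''
      {g : G | ((g • limitSet G M H) ∩ K).Nonempty ∧
               ((g • limitSet G M H) ∩ L).Nonempty}).Finite

end ConvergenceGroups

/-!
If `gHg⁻¹ ≤ H`, then `g` maps `Λ(H)` into itself, so for two limit points `a ≠ b` every coset
`g⁻ⁿH` translates `Λ(H)` onto a set containing both. Dynamical quasiconvexity applied to `{a}`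
and `{b}` leaves only finitely many such cosets, hence `gᵏ ∈ H` for some `k > 0`. Then
`g⁻¹Hg = g^(k-1) (g^(-k) H g^k) g^(1-k) ⊆ g^(k-1) H g^(1-k) ⊆ H`.
-/

section Conjugation

variable {G : Type*} [Group G] {H : Subgroup G} {g : G}

lemma Subgroup.pow_mul_mul_inv_pow_mem (hconj : ∀ h ∈ H, g * h * g⁻¹ ∈ H) (n : ℕ) :
    ∀ h ∈ H, g ^ n * h * (g ^ n)⁻¹ ∈ H := by
  induction n with
  | zero => simp
  | succ n ih =>
    intro h hh
    simpa [pow_succ', mul_assoc] using hconj _ (ih h hh)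

lemma Subgroup.inv_mul_mul_mem_of_pow_mem (hconj : ∀ h ∈ H, g * h * g⁻¹ ∈ H) {k : ℕ}
    (hk : 0 < k) (hgk : g ^ k ∈ H) {x : G} (hx : x ∈ H) : g⁻¹ * x * g ∈ H := by
  obtain ⟨j, rfl⟩ := Nat.exists_eq_add_of_lt hk
  have hconj_k : (g ^ (j + 1))⁻¹ * x * g ^ (j + 1) ∈ H :=
    mul_mem (mul_mem (inv_mem (by simpa using hgk)) hx) (by simpa using hgk)
  convert pow_mul_mul_inv_pow_mem hconj j _ hconj_k using 1
  group

end Conjugation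

section LimitSet

variable {G M : Type*} [Group G] [TopologicalSpace M] [MulAction G M] {H : Subgroup G} {g : G}

lemma mapsTo_smul_limitSet (hg : Continuous fun x : M => g • x)
    (hconj : ∀ h ∈ H, g * h * g⁻¹ ∈ H) :
    MapsTo (g • ·) (limitSet G M H) (limitSet G M H) := by
  rintro x ⟨m, hx⟩
  refine ⟨g • m, closure_mono ?_ (image_closure_subset_closure_image hg ⟨x, hx, rfl⟩)⟩
  rintro _ ⟨_, ⟨⟨h, hh, rfl⟩, hne⟩, rfl⟩
  refine ⟨⟨g * h * g⁻¹, hconj h hh, by simp [mul_smul]⟩, ?_⟩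
  exact fun heq => hne (smul_left_cancel g heq)

lemma DynamicallyQuasiconvex.exists_pow_mem [T1Space M] (hdqc : DynamicallyQuasiconvex G M H)
    (hΛ : 2 ≤ (limitSet G M H).encard)
    (hg : MapsTo (g • ·) (limitSet G M H) (limitSet G M H)) :
    ∃ k, 0 < k ∧ g ^ k ∈ H := by
  obtain ⟨a, b, ha, hb, hab⟩ := one_lt_encard_iff.mp (lt_of_lt_of_le (by norm_num) hΛ)
  have hpow : ∀ n : ℕ, ∀ x ∈ limitSet G M H, x ∈ (g ^ n)⁻¹ • limitSet G M H :=
    fun n x hx => mem_inv_smul_set_iff.mpr (by simpa [smul_iterate] using hg.iterate n hx)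
  have hcosets : ∀ n : ℕ, (((g ^ n)⁻¹ : G) : G ⧸ H) ∈ (fun x : G => (x : G ⧸ H)) ''
      {x : G | (x • limitSet G M H ∩ {a}).Nonempty ∧ (x • limitSet G M H ∩ {b}).Nonempty} :=
    fun n => ⟨_, ⟨⟨a, hpow n a ha, rfl⟩, ⟨b, hpow n b hb, rfl⟩⟩, rfl⟩
  obtain ⟨m, n, hmn, hcoset⟩ := (hdqc {a} {b} isClosed_singleton isClosed_singleton
    (disjoint_singleton.mpr hab)).exists_lt_map_eq_of_forall_mem hcosets
  refine ⟨n - m, Nat.sub_pos_of_lt hmn, inv_mem_iff.mp ?_⟩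
  convert QuotientGroup.eq.mp hcoset using 1
  rw [inv_inv, ← Nat.sub_add_cancel hmn.le, pow_add, Nat.add_sub_cancel]
  group

end LimitSet

theorem proper_conjugates_of_dynamically_quasiconvex_general
    {G M : Type*} [Group G] [TopologicalSpace M]
    [TopologicalSpace.MetrizableSpace M] [MulAction G M]
    (hconv : IsConvergenceAction G M)
    (H : Subgroup G) (hdqc : DynamicallyQuasiconvex G M H)
    (hΛ : 2 ≤ (limitSet G M H).encard) :
    ∀ g : G, g ∉ H →
      (fun x : G => g * x * g⁻¹) '' (H : Set G) ⊆ (H : Set G) →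
      (fun x : G => g * x * g⁻¹) '' (H : Set G) = (H : Set G) := by
  intro g _ hsub
  have hconj : ∀ h ∈ H, g * h * g⁻¹ ∈ H := fun h hh => hsub ⟨h, hh, rfl⟩
  obtain ⟨k, hk, hgk⟩ := hdqc.exists_pow_mem hΛ (mapsTo_smul_limitSet (hconv.1 g) hconj)
  refine hsub.antisymm fun x hx => ⟨g⁻¹ * x * g, ?_, by group⟩
  exact H.inv_mul_mul_mem_of_pow_mem hconj hk hgk hx

/-- a dynamically quasiconvex subgroup with at least two limit points
cannot properly contain a conjugate of itself. -/
theorem proper_conjugates_of_dynamically_quasiconvex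
    {G M : Type*} [Group G] [TopologicalSpace M] [CompactSpace M]
    [TopologicalSpace.MetrizableSpace M] [MulAction G M]
    (hconv : IsConvergenceAction G M)
    (h3 : ∃ a b c : M, a ≠ b ∧ a ≠ c ∧ b ≠ c)
    (H : Subgroup G) (hdqc : DynamicallyQuasiconvex G M H)
    (hΛ : 2 ≤ (limitSet G M H).encard) :
    ∀ g : G, g ∉ H →
      (fun x : G => g * x * g⁻¹) '' (H : Set G) ⊆ (H : Set G) →
      (fun x : G => g * x * g⁻¹) '' (H : Set G) = (H : Set G) :=
  proper_conjugates_of_dynamically_quasiconvex_general hconv H hdqc hΛ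
end

section
/- Let G be a finitely generated group with a finite symmetric generating set S whose Floyd boundary ∂G is nontrivial, so that the left-multiplication action of G extends to a convergence group action of G on ∂G. If H is an undistorted finitely generated subgroup of G, then H is dynamically quasiconvex with respect to the action of G on ∂G. -/
open Pointwise Filter Topology Set

section Floyd

variable {G : Type*} [Group G]

/-- The word metric on `G` determined by a generating set `S`: the length of a shortest
word over `S` representing `x⁻¹ * y`. -/
noncomputable def wordDist (S : Set G) (x y : G) : ℕ :=
  sInf {n : ℕ | ∃ l : List G, (∀ a ∈ l, a ∈ S) ∧ l.prod = x⁻¹ * y ∧ l.length = n}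

/-- The Floyd length of the edge of the Cayley graph `Γ(G,S)` joining `x` and `y`:
the edge is rescaled by the factor `f(d_S(1,e)) = d_S(1,e)⁻²` (where `d_S(1,e)` is the
word distance from the identity to the edge, and edges at the identity keep length 1). -/
noncomputable def floydEdgeWeight (S : Set G) (x y : G) : ℝ :=
  ((max 1 (min (wordDist S 1 x) (wordDist S 1 y)) : ℕ) : ℝ)⁻¹ ^ 2

/-- The Floyd length of an edge path in the Cayley graph, recorded as its list of
vertices: the sum of the rescaled lengths of its edges. -/
noncomputable def floydLength (S : Set G) : List G → ℝ
  | [] => 0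
  | [_] => 0
  | a :: b :: l => floydEdgeWeight S a b + floydLength S (b :: l)

/-- `l` is (the list of vertices of) an edge path in the Cayley graph `Γ(G,S)` from `x`
to `y`: consecutive vertices are at word distance 1. -/
def IsEdgePath (S : Set G) (x y : G) (l : List G) : Prop :=
  l.head? = some x ∧ l.getLast? = some y ∧ List.Chain' (fun a b => wordDist S a b = 1) l

/-- The Floyd metric on `G`: the infimum of Floyd lengths of edge paths joining the two
points. -/
noncomputable def floydDist (S : Set G) (x y : G) : ℝ :=
  sInf {r : ℝ | ∃ l : List G, IsEdgePath S x y l ∧ floydLength S l = r}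

/-- The limit set in the Floyd completion `𝔾` (with `ι : G → 𝔾` the canonical map) of a
subgroup `H ≤ G`: the set of accumulation points of the `H`-orbits of points of `G`. -/
def floydLimitSet {𝔾 : Type*} [TopologicalSpace 𝔾] (ι : G → 𝔾) (H : Subgroup G) :
    Set 𝔾 :=
  {x : 𝔾 | ∃ g₀ : G, x ∈ closure (((fun h : G => ι (h * g₀)) '' (H : Set G)) \ {x})}

/-- `H` (with finite generating set `T`) is undistorted in `G` (with finite generating
set `S`): the inclusion `(H, d_T) → (G, d_S)` is a quasi-isometric embedding. -/
def IsUndistorted (S T : Set G) (H : Subgroup G) : Prop :=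
  ∃ ε : ℝ, 1 ≤ ε ∧ ∀ x ∈ H, ∀ y ∈ H,
    ε⁻¹ * (wordDist T x y : ℝ) - ε ≤ (wordDist S x y : ℝ) ∧
    (wordDist S x y : ℝ) ≤ ε * (wordDist T x y : ℝ) + ε

end Floyd

/-!
Separate `K` and `L` by `δ > 0`. If `g Λ(H)` meets both, there are `h, h' ∈ H` with `ι (g h)`,
`ι (g h')` at Floyd distance `≥ δ / 2`. By undistortion, the `g`-translate of a `T`-geodesic from
`h` to `h'` is an `S`-quasigeodesic with steps of bounded length; if its closest vertex to `1` is
at distance `m`, its `i`-th vertex is at distance `≳ m + |i - i₀| / ε`, and since edges at distance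
`n` have Floyd length `n⁻²`, its total Floyd length is `O(1 / m)`. Hence `m ≤ R(δ)`, so `g H`
contains an element of the ball of radius `R(δ)`, which leaves finitely many cosets.
-/

section WordMetric

variable {G : Type*} [Group G] {S : Set G}

theorem wordDist_le_length {x y : G} {l : List G} (hl : ∀ a ∈ l, a ∈ S)
    (hp : l.prod = x⁻¹ * y) : wordDist S x y ≤ l.length :=
  Nat.sInf_le ⟨l, hl, hp, rfl⟩

theorem wordDist_eq_zero_of_not_exists {x y : G}
    (h : ¬∃ l : List G, (∀ a ∈ l, a ∈ S) ∧ l.prod = x⁻¹ * y) : wordDist S x y = 0 := by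
  refine Nat.sInf_eq_zero.2 (Or.inr (Set.eq_empty_of_forall_notMem ?_))
  rintro n ⟨l, hl, hp, -⟩
  exact h ⟨l, hl, hp⟩

theorem exists_word_of_closure_eq_top (hsym : ∀ s ∈ S, s⁻¹ ∈ S)
    (hgen : Subgroup.closure S = ⊤) (x y : G) :
    ∃ l : List G, (∀ a ∈ l, a ∈ S) ∧ l.prod = x⁻¹ * y := by
  have hmem : x⁻¹ * y ∈ (Subgroup.closure S).toSubmonoid := by rw [hgen]; trivial
  rw [Subgroup.closure_toSubmonoid] at hmem
  obtain ⟨l, hl, hp⟩ := Submonoid.exists_list_of_mem_closure hmem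
  refine ⟨l, fun a ha => ?_, hp⟩
  rcases hl a ha with h | h
  · exact h
  · simpa using hsym _ h

/-- The letters `1` are dropped so that the word spells an edge path of the Cayley graph. -/
theorem exists_word_length_eq_wordDist {x y : G}
    (h : ∃ l : List G, (∀ a ∈ l, a ∈ S) ∧ l.prod = x⁻¹ * y) :
    ∃ l : List G, (∀ a ∈ l, a ∈ S ∧ a ≠ 1) ∧ l.prod = x⁻¹ * y ∧
      l.length = wordDist S x y := by
  classical
  obtain ⟨l, hl, hp, hlen⟩ := Nat.sInf_mem (s := {n : ℕ | ∃ l : List G,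
    (∀ a ∈ l, a ∈ S) ∧ l.prod = x⁻¹ * y ∧ l.length = n})
    (let ⟨l, hl, hp⟩ := h; ⟨_, l, hl, hp, rfl⟩)
  have hmem : ∀ a ∈ l.filter (· != 1), a ∈ S ∧ a ≠ 1 := fun a ha => by
    rw [List.mem_filter] at ha
    exact ⟨hl a ha.1, by simpa using ha.2⟩
  have hprod : (l.filter (· != 1)).prod = x⁻¹ * y := by rw [List.prod_filter_bne_one, hp]
  refine ⟨_, hmem, hprod, le_antisymm ?_ (wordDist_le_length (fun a ha => (hmem a ha).1) hprod)⟩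
  exact (List.length_filter_le _ _).trans hlen.le

theorem wordDist_triangle_of_exists {x y z : G}
    (hxy : ∃ l : List G, (∀ a ∈ l, a ∈ S) ∧ l.prod = x⁻¹ * y)
    (hyz : ∃ l : List G, (∀ a ∈ l, a ∈ S) ∧ l.prod = y⁻¹ * z) :
    wordDist S x z ≤ wordDist S x y + wordDist S y z := by
  obtain ⟨l₁, hl₁, hp₁, hlen₁⟩ := exists_word_length_eq_wordDist hxy
  obtain ⟨l₂, hl₂, hp₂, hlen₂⟩ := exists_word_length_eq_wordDist hyz
  have hl : ∀ a ∈ l₁ ++ l₂, a ∈ S := by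
    simp only [List.mem_append]
    rintro a (ha | ha)
    exacts [(hl₁ a ha).1, (hl₂ a ha).1]
  have := wordDist_le_length (x := x) (y := z) hl (by rw [List.prod_append, hp₁, hp₂]; group)
  rwa [List.length_append, hlen₁, hlen₂] at this

theorem wordDist_triangle (hsym : ∀ s ∈ S, s⁻¹ ∈ S) (hgen : Subgroup.closure S = ⊤)
    (x y z : G) : wordDist S x z ≤ wordDist S x y + wordDist S y z :=
  wordDist_triangle_of_exists (exists_word_of_closure_eq_top hsym hgen x y)
    (exists_word_of_closure_eq_top hsym hgen y z)

theorem wordDist_comm (hsym : ∀ s ∈ S, s⁻¹ ∈ S) (x y : G) :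
    wordDist S x y = wordDist S y x := by
  have key : ∀ u v : G,
      {n : ℕ | ∃ l : List G, (∀ a ∈ l, a ∈ S) ∧ l.prod = u⁻¹ * v ∧ l.length = n} ⊆
      {n : ℕ | ∃ l : List G, (∀ a ∈ l, a ∈ S) ∧ l.prod = v⁻¹ * u ∧ l.length = n} := by
    rintro u v n ⟨l, hl, hp, rfl⟩
    refine ⟨(l.map (·⁻¹)).reverse, ?_, ?_, by simp⟩
    · simp only [List.mem_reverse, List.mem_map]
      rintro _ ⟨b, hb, rfl⟩
      exact hsym _ (hl b hb)
    · rw [← List.prod_inv_reverse, hp]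
      group
  unfold wordDist
  rw [(key x y).antisymm (key y x)]

theorem wordDist_mul_left (g x y : G) : wordDist S (g * x) (g * y) = wordDist S x y := by
  simp only [wordDist, mul_inv_rev, mul_assoc, inv_mul_cancel_left]

theorem wordDist_eq_wordDist_one_inv_mul (x y : G) : wordDist S x y = wordDist S 1 (x⁻¹ * y) := by
  simpa using (wordDist_mul_left (S := S) x⁻¹ x y).symm

theorem wordDist_mul_le_one {a : G} (ha : a ∈ S) (x : G) : wordDist S x (x * a) ≤ 1 :=
  wordDist_le_length (l := [a]) (by simpa using ha) (by simp)

theorem wordDist_mul_eq_one {a : G} (ha : a ∈ S) (ha₁ : a ≠ 1) (x : G) :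
    wordDist S x (x * a) = 1 := by
  refine (wordDist_mul_le_one ha x).antisymm (Nat.one_le_iff_ne_zero.2 fun h => ?_)
  rcases Nat.sInf_eq_zero.1 h with ⟨l, -, hp, hlen⟩ | hempty
  · rw [List.length_eq_zero_iff.1 hlen, List.prod_nil, inv_mul_cancel_left] at hp
    exact ha₁ hp.symm
  · exact hempty.subset ⟨[a], by simpa using ha, by simp, rfl⟩

theorem wordDist_le_wordDist_one_add (hsym : ∀ s ∈ S, s⁻¹ ∈ S) (hgen : Subgroup.closure S = ⊤)
    (x y : G) : wordDist S x y ≤ wordDist S 1 x + wordDist S 1 y := by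
  rw [wordDist_comm hsym 1 x]
  exact wordDist_triangle hsym hgen x 1 y

theorem wordDist_one_le_mul_add_one (hsym : ∀ s ∈ S, s⁻¹ ∈ S) (hgen : Subgroup.closure S = ⊤)
    {a : G} (ha : a ∈ S) (u : G) : wordDist S 1 u ≤ wordDist S 1 (u * a) + 1 := by
  refine (wordDist_triangle hsym hgen 1 (u * a) u).trans (Nat.add_le_add_left ?_ _)
  rw [wordDist_comm hsym]
  exact wordDist_mul_le_one ha u

theorem finite_setOf_wordDist_one_le (S : Finset G) (hsym : ∀ s ∈ (S : Set G), s⁻¹ ∈ (S : Set G))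
    (hgen : Subgroup.closure (S : Set G) = ⊤) (R : ℕ) :
    {x : G | wordDist (S : Set G) 1 x ≤ R}.Finite := by
  refine ((List.finite_length_le S R).image fun l : List S => (l.map Subtype.val).prod).subset ?_
  intro x hx
  obtain ⟨l, hl, hp, hlen⟩ :=
    exists_word_length_eq_wordDist (exists_word_of_closure_eq_top hsym hgen 1 x)
  refine ⟨l.pmap (fun a ha => (⟨a, ha⟩ : S)) fun a ha => (hl a ha).1, ?_, ?_⟩
  · simpa [hlen] using hx
  · simpa [List.map_pmap] using hp

end WordMetric

section FloydMetric

variable {G : Type*} [Group G] {S : Set G}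

theorem floydLength_nonneg : ∀ l : List G, 0 ≤ floydLength S l
  | [] | [_] => le_rfl
  | _ :: b :: l => add_nonneg (by unfold floydEdgeWeight; positivity) (floydLength_nonneg (b :: l))

theorem floydDist_le_floydLength {x y : G} {l : List G} (h : IsEdgePath S x y l) :
    floydDist S x y ≤ floydLength S l :=
  csInf_le ⟨0, fun _ ⟨l', _, hl'⟩ => hl' ▸ floydLength_nonneg l'⟩ ⟨l, h, rfl⟩

theorem scanl_eq_cons_tail {α β : Type*} (f : β → α → β) (b : β) (l : List α) :
    l.scanl f b = b :: (l.scanl f b).tail := by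
  cases l <;> simp

theorem isEdgePath_scanl (l : List G) (hl : ∀ a ∈ l, a ∈ S ∧ a ≠ 1) (u : G) :
    IsEdgePath S u (u * l.prod) (l.scanl (· * ·) u) := by
  refine ⟨List.head?_scanl, by rw [List.getLast?_scanl, List.foldl_eq_apply_foldr, List.prod], ?_⟩
  induction l generalizing u with
  | nil => exact .singleton u
  | cons a t ih =>
    rw [List.scanl_cons]
    refine (ih (fun b hb => hl b (List.mem_cons_of_mem a hb)) (u * a)).cons ?_
    rw [List.head?_scanl]
    rintro _ ⟨⟩
    exact wordDist_mul_eq_one (hl a List.mem_cons_self).1 (hl a List.mem_cons_self).2 u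

theorem floydEdgeWeight_le {x y : G} {m : ℕ} (hm : 1 ≤ m) (hx : m ≤ wordDist S 1 x)
    (hy : m ≤ wordDist S 1 y) : floydEdgeWeight S x y ≤ ((m : ℝ) ^ 2)⁻¹ := by
  rw [floydEdgeWeight, inv_pow]
  gcongr
  exact le_max_of_le_right (le_min hx hy)

theorem floydLength_scanl_le (hsym : ∀ s ∈ S, s⁻¹ ∈ S) (hgen : Subgroup.closure S = ⊤)
    {l : List G} (hl : ∀ a ∈ l, a ∈ S) {m : ℕ} (hm : 1 ≤ m) {u : G}
    (hu : m + l.length ≤ wordDist S 1 u) :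
    floydLength S (l.scanl (· * ·) u) ≤ l.length / (m : ℝ) ^ 2 := by
  induction l generalizing u with
  | nil => simp [floydLength]
  | cons a t ih =>
    have ha := hl a List.mem_cons_self
    have hua := wordDist_one_le_mul_add_one hsym hgen ha u
    simp only [List.length_cons] at hu
    rw [List.scanl_cons, scanl_eq_cons_tail, floydLength, ← scanl_eq_cons_tail]
    have hedge := floydEdgeWeight_le (S := S) (x := u) (y := u * a) hm (by omega) (by omega)
    have hrest := ih (fun b hb => hl b (List.mem_cons_of_mem a hb)) (u := u * a) (by omega)
    rw [List.length_cons, Nat.cast_succ, add_div, div_eq_mul_inv 1]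
    linarith

/-- A word of length `ℓ` read from a vertex at distance `≥ m + ℓ` from `1` stays at distance
`≥ m`, so each of its edges has Floyd length `≤ 1 / m²`. -/
theorem floydDist_mul_le_of_add_le (hsym : ∀ s ∈ S, s⁻¹ ∈ S) (hgen : Subgroup.closure S = ⊤)
    {u v : G} {m : ℕ} (hm : 1 ≤ m) (huv : m + wordDist S 1 v ≤ wordDist S 1 u) :
    floydDist S u (u * v) ≤ wordDist S 1 v / (m : ℝ) ^ 2 := by
  obtain ⟨l, hl, hp, hlen⟩ :=
    exists_word_length_eq_wordDist (exists_word_of_closure_eq_top hsym hgen 1 v)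
  rw [inv_one, one_mul] at hp
  have hpath := floydDist_le_floydLength (isEdgePath_scanl l hl u)
  rw [hp] at hpath
  rw [← hlen] at huv ⊢
  exact hpath.trans (floydLength_scanl_le hsym hgen (fun a ha => (hl a ha).1) hm huv)

theorem floydDist_mul_le (hsym : ∀ s ∈ S, s⁻¹ ∈ S) (hgen : Subgroup.closure S = ⊤)
    {u v : G} (hu : 1 ≤ wordDist S 1 u) (huv : 2 * wordDist S 1 v ≤ wordDist S 1 u) :
    floydDist S u (u * v) ≤ 4 * wordDist S 1 v / (wordDist S 1 u : ℝ) ^ 2 := by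
  set q := wordDist S 1 u
  set r := wordDist S 1 v
  have hqr : (q : ℝ) / 2 ≤ ((q - r : ℕ) : ℝ) := by
    rw [Nat.cast_sub (by omega)]
    have : (2 * r : ℝ) ≤ q := by exact_mod_cast huv
    linarith
  calc floydDist S u (u * v) ≤ r / ((q - r : ℕ) : ℝ) ^ 2 :=
        floydDist_mul_le_of_add_le hsym hgen (by omega) (by omega)
    _ ≤ r / ((q : ℝ) / 2) ^ 2 := by gcongr
    _ = 4 * r / (q : ℝ) ^ 2 := by ring

end FloydMetric

section Sums

open Finset

theorem sum_range_inv_add_sq_le {a : ℝ} (ha : 1 ≤ a) (N : ℕ) :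
    ∑ n ∈ range N, ((a + n) ^ 2)⁻¹ ≤ 2 / a := by
  -- `1 / x² ≤ 1 / (x - 1/2) - 1 / (x + 1/2)` makes the sum telescope.
  have hterm : ∀ n : ℕ, ((a + n) ^ 2)⁻¹ ≤ (a + n - 1 / 2)⁻¹ - (a + (n + 1 : ℕ) - 1 / 2)⁻¹ := by
    intro n
    have hn : (0 : ℝ) ≤ n := n.cast_nonneg
    rw [inv_sub_inv (by linarith) (by push_cast; linarith), inv_eq_one_div]
    push_cast
    rw [div_le_div_iff₀ (by positivity) (by nlinarith)]
    nlinarith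
  calc ∑ n ∈ range N, ((a + n) ^ 2)⁻¹
      ≤ ∑ n ∈ range N, ((a + n - 1 / 2)⁻¹ - (a + (n + 1 : ℕ) - 1 / 2)⁻¹) :=
        sum_le_sum fun n _ => hterm n
    _ = (a - 1 / 2)⁻¹ - (a + N - 1 / 2)⁻¹ := by
      rw [sum_range_sub' (fun n : ℕ => (a + n - 1 / 2)⁻¹)]; simp
    _ ≤ (a - 1 / 2)⁻¹ := by
      have hN : (0 : ℝ) ≤ N := N.cast_nonneg
      have : (0 : ℝ) ≤ (a + N - 1 / 2)⁻¹ := inv_nonneg.2 (by linarith)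
      linarith
    _ ≤ 2 / a := by
      rw [inv_eq_one_div, div_le_div_iff₀ (by linarith) (by linarith)]
      linarith

theorem sum_range_comp_dist_le {c : ℕ → ℝ} (hc : ∀ n, 0 ≤ c n) {D i₀ : ℕ} (hi₀ : i₀ ≤ D) :
    ∑ i ∈ range D, c (Nat.dist i i₀) ≤ 2 * ∑ n ∈ range (D + 1), c n := by
  have hsub : ∀ {s : Finset ℕ}, s ⊆ range (D + 1) → ∑ n ∈ s, c n ≤ ∑ n ∈ range (D + 1), c n :=
    fun h => sum_le_sum_of_subset_of_nonneg h fun n _ _ => hc n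
  rw [← sum_range_add_sum_Ico _ hi₀, two_mul]
  refine add_le_add ?_ ?_
  · calc ∑ i ∈ range i₀, c (Nat.dist i i₀) = ∑ j ∈ range i₀, c (j + 1) := by
          rw [← sum_range_reflect]
          refine sum_congr rfl fun j hj => ?_
          rw [Finset.mem_range] at hj
          simp only [Nat.dist]
          congr 1
          omega
      _ = ∑ n ∈ (range i₀).map (addRightEmbedding 1), c n := by rw [sum_map]; rfl
      _ ≤ ∑ n ∈ range (D + 1), c n := hsub fun n hn => by
          simp only [Finset.mem_map, Finset.mem_range, addRightEmbedding_apply] at hn ⊢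
          omega
  · calc ∑ i ∈ Ico i₀ D, c (Nat.dist i i₀) = ∑ k ∈ range (D - i₀), c k := by
          rw [sum_Ico_eq_sum_range]
          refine sum_congr rfl fun k _ => ?_
          simp only [Nat.dist]
          congr 1
          omega
      _ ≤ ∑ n ∈ range (D + 1), c n := hsub (range_subset_range.2 (by omega))

end Sums

section Quasigeodesics

variable {G : Type*} [Group G] {S : Set G}

open Finset

theorem sub_le_wordDist_take_prod {x y : G} {τ : List G} (hτ : ∀ a ∈ τ, a ∈ S)
    (hp : τ.prod = x⁻¹ * y) (hlen : τ.length = wordDist S x y) {i j : ℕ} (hij : i ≤ j)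
    (hj : j ≤ τ.length) :
    j - i ≤ wordDist S (x * (τ.take i).prod) (x * (τ.take j).prod) := by
  have hsub : ∀ {l : List G}, l ⊆ τ → ∀ a ∈ l, a ∈ S := fun hl a ha => hτ a (hl ha)
  have htake : ∀ n, (τ.take n).prod = x⁻¹ * (x * (τ.take n).prod) := fun n => by group
  have hdrop : ∀ n, (τ.drop n).prod = (x * (τ.take n).prod)⁻¹ * y := fun n => by
    rw [mul_inv_rev, mul_assoc, ← hp, ← List.prod_take_mul_prod_drop τ n]; group
  have hmid : ((τ.drop i).take (j - i)).prod =
      (x * (τ.take i).prod)⁻¹ * (x * (τ.take j).prod) := by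
    rw [← Nat.add_sub_cancel' hij, List.take_add, Nat.add_sub_cancel_left, List.prod_append]
    group
  have hxi := wordDist_le_length (hsub (List.take_subset i τ)) (htake i)
  have hjy := wordDist_le_length (hsub (List.drop_subset j τ)) (hdrop j)
  have hxy := (wordDist_triangle_of_exists ⟨_, hsub (List.take_subset i τ), htake i⟩
      ⟨_, hsub (List.drop_subset i τ), hdrop i⟩).trans
    (Nat.add_le_add_left (wordDist_triangle_of_exists
      ⟨_, fun a ha => hτ a (List.drop_subset i τ (List.take_subset _ _ ha)), hmid⟩
      ⟨_, hsub (List.drop_subset j τ), hdrop j⟩) _)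
  simp only [List.length_take, List.length_drop] at hxi hjy
  omega

/-- With `m` the distance from `1` to the closest vertex `p i₀`, the vertex `p i` is at distance
`≥ (ε m + |i - i₀|) / 4ε` from `1`, so the Floyd lengths of the steps sum to `O(M ε / m)`. -/
theorem dist_le_of_quasigeodesic (hsym : ∀ s ∈ S, s⁻¹ ∈ S) (hgen : Subgroup.closure S = ⊤)
    {X : Type*} [PseudoMetricSpace X] {ι : G → X}
    (hdist : ∀ x y : G, dist (ι x) (ι y) = floydDist S x y) {M : ℕ} {ε : ℝ} (hε : 1 ≤ ε)
    {p : ℕ → G} {D i₀ : ℕ} (hi₀ : i₀ ≤ D)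
    (hstep : ∀ i < D, wordDist S (p i) (p (i + 1)) ≤ M)
    (hqg : ∀ i ≤ D, ε⁻¹ * Nat.dist i i₀ - ε ≤ wordDist S (p i) (p i₀))
    (hmin : ∀ i ≤ D, wordDist S 1 (p i₀) ≤ wordDist S 1 (p i))
    (hM : 2 * M + 1 ≤ wordDist S 1 (p i₀)) (hεm : ε ≤ wordDist S 1 (p i₀)) :
    dist (ι (p 0)) (ι (p D)) ≤ 256 * M * ε / wordDist S 1 (p i₀) := by
  set m := wordDist S 1 (p i₀)
  have hm : (1 : ℝ) ≤ m := by exact_mod_cast (by omega : 1 ≤ m)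
  have hfar : ∀ i ≤ D, ε * m + Nat.dist i i₀ ≤ 4 * ε * wordDist S 1 (p i) := by
    intro i hi
    have hq : (m : ℝ) ≤ wordDist S 1 (p i) := by exact_mod_cast hmin i hi
    have htri : (wordDist S (p i) (p i₀) : ℝ) ≤ wordDist S 1 (p i) + m := by
      exact_mod_cast wordDist_le_wordDist_one_add hsym hgen (p i) (p i₀)
    have hd : (Nat.dist i i₀ : ℝ) ≤ ε * (wordDist S 1 (p i) + m + ε) := by
      have := mul_le_mul_of_nonneg_left (((hqg i hi).trans htri)) (by positivity : 0 ≤ ε)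
      rw [mul_sub, mul_inv_cancel_left₀ (by positivity)] at this
      linarith
    nlinarith
  have hedge : ∀ i ∈ range D, dist (ι (p i)) (ι (p (i + 1))) ≤
      64 * M * ε ^ 2 * ((ε * m + Nat.dist i i₀) ^ 2)⁻¹ := by
    intro i hi
    rw [Finset.mem_range] at hi
    set q := wordDist S 1 (p i)
    have hmq := hmin i hi.le
    have hv : wordDist S 1 ((p i)⁻¹ * p (i + 1)) ≤ M := by
      rw [← wordDist_eq_wordDist_one_inv_mul]; exact hstep i hi
    have hpos : 0 < ε * m + Nat.dist i i₀ := by positivity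
    rw [hdist, ← mul_inv_cancel_left (p i) (p (i + 1))]
    calc floydDist S (p i) (p i * ((p i)⁻¹ * p (i + 1)))
        ≤ 4 * wordDist S 1 ((p i)⁻¹ * p (i + 1)) / (q : ℝ) ^ 2 :=
          floydDist_mul_le hsym hgen (by omega) (by omega)
      _ ≤ 4 * M / (q : ℝ) ^ 2 := by gcongr
      _ = 64 * M * ε ^ 2 / (4 * ε * q) ^ 2 := by field_simp; ring
      _ ≤ 64 * M * ε ^ 2 / (ε * m + Nat.dist i i₀) ^ 2 := by gcongr; exact hfar i hi.le
      _ = 64 * M * ε ^ 2 * ((ε * m + Nat.dist i i₀) ^ 2)⁻¹ := div_eq_mul_inv _ _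
  calc dist (ι (p 0)) (ι (p D)) ≤ ∑ i ∈ range D, dist (ι (p i)) (ι (p (i + 1))) :=
        dist_le_range_sum_dist (fun i => ι (p i)) D
    _ ≤ ∑ i ∈ range D, 64 * M * ε ^ 2 * ((ε * m + Nat.dist i i₀) ^ 2)⁻¹ := sum_le_sum hedge
    _ = 64 * M * ε ^ 2 * ∑ i ∈ range D, ((ε * m + Nat.dist i i₀) ^ 2)⁻¹ := by rw [mul_sum]
    _ ≤ 64 * M * ε ^ 2 * (2 * ∑ n ∈ range (D + 1), ((ε * m + n) ^ 2)⁻¹) := by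
        gcongr
        exact sum_range_comp_dist_le (c := fun n : ℕ => ((ε * m + n) ^ 2)⁻¹)
          (fun n => by positivity) hi₀
    _ ≤ 64 * M * ε ^ 2 * (2 * (2 / (ε * m))) := by
        gcongr
        exact sum_range_inv_add_sq_le (by nlinarith) _
    _ = 256 * M * ε / m := by field_simp; ring

end Quasigeodesics

section Undistorted

variable {G : Type*} [Group G] {S : Set G}

open Finset

/-- The `g`-translate of a `T`-geodesic from `h` to `h'` is an `S`-quasigeodesic. -/
theorem dist_le_of_forall_lt_wordDist_one (hsym : ∀ s ∈ S, s⁻¹ ∈ S)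
    (hgen : Subgroup.closure S = ⊤) {X : Type*} [PseudoMetricSpace X] {ι : G → X}
    (hdist : ∀ x y : G, dist (ι x) (ι y) = floydDist S x y) {H : Subgroup G} {T : Set G}
    (hT : T ⊆ H) {M : ℕ} (hM : ∀ t ∈ T, wordDist S 1 t ≤ M) {ε : ℝ} (hε : 1 ≤ ε)
    (hqi : ∀ x ∈ H, ∀ y ∈ H, ε⁻¹ * wordDist T x y - ε ≤ wordDist S x y)
    {g h h' : G} (hh : h ∈ H) (hword : ∃ l : List G, (∀ a ∈ l, a ∈ T) ∧ l.prod = h⁻¹ * h')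
    {R : ℕ} (hR : 2 * M + 1 ≤ R) (hεR : ε ≤ R) (hfar : ∀ k ∈ H, R < wordDist S 1 (g * k)) :
    dist (ι (g * h)) (ι (g * h')) ≤ 256 * M * ε / R := by
  obtain ⟨τ, hτ, hp, hlen⟩ := exists_word_length_eq_wordDist hword
  set k : ℕ → G := fun i => h * (τ.take i).prod
  have hkH : ∀ i, k i ∈ H := fun i => H.mul_mem hh <| H.list_prod_mem fun a ha =>
    hT (hτ a (List.mem_of_mem_take ha)).1
  obtain ⟨i₀, hi₀, hmin⟩ := exists_min_image (range (τ.length + 1))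
    (fun i => wordDist S 1 (g * k i)) nonempty_range_add_one
  rw [Finset.mem_range, Nat.lt_succ_iff] at hi₀
  have hk₀ : k 0 = h := by simp [k]
  have hkD : k τ.length = h' := by simp [k, hp]
  have hstep : ∀ i < τ.length, wordDist S (g * k i) (g * k (i + 1)) ≤ M := fun i hi => by
    rw [wordDist_mul_left, wordDist_eq_wordDist_one_inv_mul]
    simpa [k, List.prod_take_succ τ i hi, mul_assoc] using hM _ (hτ _ (List.getElem_mem hi)).1
  have hqg : ∀ i ≤ τ.length,
      ε⁻¹ * Nat.dist i i₀ - ε ≤ wordDist S (g * k i) (g * k i₀) := fun i hi => by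
    rw [wordDist_mul_left]
    rcases le_total i i₀ with hii₀ | hi₀i
    · refine le_trans ?_ (hqi _ (hkH i) _ (hkH i₀))
      have := sub_le_wordDist_take_prod (fun a ha => (hτ a ha).1) hp hlen hii₀ hi₀
      rw [Nat.dist_eq_sub_of_le hii₀]
      gcongr
    · rw [wordDist_comm hsym]
      refine le_trans ?_ (hqi _ (hkH i₀) _ (hkH i))
      have := sub_le_wordDist_take_prod (fun a ha => (hτ a ha).1) hp hlen hi₀i hi
      rw [Nat.dist_eq_sub_of_le_right hi₀i]
      gcongr
  have hRm : (R : ℝ) < wordDist S 1 (g * k i₀) := by exact_mod_cast hfar _ (hkH i₀)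
  have hquasi := dist_le_of_quasigeodesic hsym hgen hdist hε (p := fun i => g * k i) hi₀ hstep
    hqg (fun i hi => hmin i (Finset.mem_range.2 (by omega))) (by have := hfar _ (hkH i₀); omega)
    (by linarith)
  rw [← hk₀, ← hkD]
  exact hquasi.trans (by gcongr; linarith)

theorem exists_mem_wordDist_one_le_of_le_dist (hsym : ∀ s ∈ S, s⁻¹ ∈ S)
    (hgen : Subgroup.closure S = ⊤) {X : Type*} [PseudoMetricSpace X] {ι : G → X}
    (hdist : ∀ x y : G, dist (ι x) (ι y) = floydDist S x y) {H : Subgroup G} {T : Set G}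
    (hT : T ⊆ H) {M : ℕ} (hM : ∀ t ∈ T, wordDist S 1 t ≤ M) (hund : IsUndistorted S T H)
    {δ : ℝ} (hδ : 0 < δ) :
    ∃ R : ℕ, ∀ g : G, ∀ h ∈ H, ∀ h' ∈ H, δ ≤ dist (ι (g * h)) (ι (g * h')) →
      ∃ k ∈ H, wordDist S 1 (g * k) ≤ R := by
  obtain ⟨ε, hε, hεH⟩ := hund
  obtain ⟨R, hR⟩ := exists_nat_gt (2 * M + 1 + 2 * ε + (256 * M + 4) * ε / δ)
  have hquot : 0 ≤ (256 * M + 4) * ε / δ := by positivity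
  have hRM : 2 * M + 1 ≤ R := by exact_mod_cast (by linarith : (2 * M + 1 : ℝ) ≤ R)
  have hRε : 2 * ε ≤ R := by linarith
  have hRδ : (256 * M + 4) * ε < R * δ := (div_lt_iff₀ hδ).1 (by linarith)
  have hR₀ : (0 : ℝ) < R := by linarith
  refine ⟨R, fun g h hh h' hh' hδd => ?_⟩
  by_contra! hfar
  by_cases hword : ∃ l : List G, (∀ a ∈ l, a ∈ T) ∧ l.prod = h⁻¹ * h'
  · have hquasi := dist_le_of_forall_lt_wordDist_one hsym hgen hdist hT hM hε
      (fun x hx y hy => (hεH x hx y hy).1) hh hword hRM (by linarith) hfar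
    rw [le_div_iff₀ hR₀] at hquasi
    nlinarith
  · -- Without a `T`-word, `wordDist T h h'` is the junk value `0`, so undistortion gives
    -- `wordDist S h h' ≤ ε`.
    have hv : (wordDist S 1 (h⁻¹ * h') : ℝ) ≤ ε := by
      have := (hεH h hh h' hh').2
      rwa [wordDist_eq_zero_of_not_exists hword, Nat.cast_zero, mul_zero, zero_add,
        wordDist_eq_wordDist_one_inv_mul] at this
    have hu := hfar h hh
    have huR : (R : ℝ) < wordDist S 1 (g * h) := by exact_mod_cast hu
    have hu2 : (R : ℝ) ≤ (wordDist S 1 (g * h) : ℝ) ^ 2 := by nlinarith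
    have hshort := calc
      δ ≤ floydDist S (g * h) (g * h * (h⁻¹ * h')) := by
        rwa [← hdist, mul_assoc, mul_inv_cancel_left]
      _ ≤ 4 * wordDist S 1 (h⁻¹ * h') / (wordDist S 1 (g * h) : ℝ) ^ 2 :=
        floydDist_mul_le hsym hgen (by omega) (by exact_mod_cast (by linarith :
          (2 * wordDist S 1 (h⁻¹ * h') : ℝ) ≤ wordDist S 1 (g * h)))
      _ ≤ 4 * ε / R := by gcongr
    rw [le_div_iff₀ hR₀] at hshort
    nlinarith

end Undistorted

section Boundary

theorem exists_pos_forall_lt_dist {X : Type*} [PseudoMetricSpace X] {K L : Set X}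
    (hK : IsCompact K) (hL : IsClosed L) (hKL : Disjoint K L) :
    ∃ δ > (0 : ℝ), ∀ x ∈ K, ∀ y ∈ L, δ < dist x y := by
  obtain ⟨r, hr, hrKL⟩ := Metric.exists_pos_forall_lt_edist hK hL hKL
  refine ⟨r, hr, fun x hx y hy => ?_⟩
  have := hrKL x hx y hy
  rwa [edist_nndist, ENNReal.coe_lt_coe, ← NNReal.coe_lt_coe, coe_nndist] at this

variable {G : Type*} [Group G] {X : Type*} [MetricSpace X] {ι : G → X}

theorem exists_pos_forall_dist_lt_le_wordDist_one (S : Finset G)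
    (hsym : ∀ s ∈ (S : Set G), s⁻¹ ∈ (S : Set G)) (hgen : Subgroup.closure (S : Set G) = ⊤)
    {z : X} (hz : z ∉ range ι) (R : ℕ) :
    ∃ η > 0, ∀ y : G, dist (ι y) z < η → R ≤ wordDist (S : Set G) 1 y := by
  have hclosed := ((finite_setOf_wordDist_one_le S hsym hgen R).image ι).isClosed
  obtain ⟨η, hη, hball⟩ := Metric.isOpen_iff.1 hclosed.isOpen_compl z
    fun ⟨y, _, hy⟩ => hz ⟨y, hy⟩
  refine ⟨η, hη, fun y hy => ?_⟩
  by_contra! hyR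
  exact hball (Metric.mem_ball.2 hy) ⟨y, hyR.le, rfl⟩

/-- `ι (h g₀)` and `ι h` are Floyd-close once `h g₀` is far from `1`, so a limit point of an
orbit `H g₀` off `ι(G)` is a limit of `ι(H)` itself. -/
theorem exists_mem_dist_lt_of_mem_smul_floydLimitSet [MulAction G X] (S : Finset G)
    (hsym : ∀ s ∈ (S : Set G), s⁻¹ ∈ (S : Set G)) (hgen : Subgroup.closure (S : Set G) = ⊤)
    (hdist : ∀ x y : G, dist (ι x) (ι y) = floydDist (S : Set G) x y)
    (hcont : ∀ g : G, Continuous fun x : X => g • x) (hext : ∀ g x : G, ι (g * x) = g • ι x)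
    {H : Subgroup G} {g : G} {x : X} (hx : x ∈ g • floydLimitSet ι H) (hxι : x ∉ range ι)
    {η : ℝ} (hη : 0 < η) : ∃ h ∈ H, dist (ι (g * h)) x < η := by
  obtain ⟨w, ⟨g₀, hw⟩, rfl⟩ := hx
  set c := wordDist (S : Set G) 1 g₀⁻¹
  obtain ⟨N, hN⟩ := exists_nat_gt (2 * c + 1 + 8 * c / η)
  have hquot : 0 ≤ 8 * c / η := by positivity
  obtain ⟨η₂, hη₂, hfar⟩ := exists_pos_forall_dist_lt_le_wordDist_one S hsym hgen hxι N
  have hcl : g • w ∈ closure ((fun h => ι (g * (h * g₀))) '' H) := by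
    refine closure_mono ?_ (image_closure_subset_closure_image (hcont g) ⟨w, hw, rfl⟩)
    rintro _ ⟨_, ⟨⟨h, hh, rfl⟩, -⟩, rfl⟩
    exact ⟨h, hh, hext g _⟩
  obtain ⟨_, ⟨h, hh, rfl⟩, hd⟩ := Metric.mem_closure_iff.1 hcl _ (lt_min (half_pos hη) hη₂)
  rw [dist_comm] at hd
  have hq := hfar _ (hd.trans_le (min_le_right _ _))
  have hqN : (N : ℝ) ≤ wordDist (S : Set G) 1 (g * (h * g₀)) := by exact_mod_cast hq
  have hcN : 8 * c < N * η := (div_lt_iff₀ hη).1 (by linarith)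
  have hq2 : (N : ℝ) ≤ (wordDist (S : Set G) 1 (g * (h * g₀)) : ℝ) ^ 2 := by nlinarith
  have hclose := calc
    dist (ι (g * h)) (ι (g * (h * g₀)))
        = floydDist (S : Set G) (g * (h * g₀)) (g * (h * g₀) * g₀⁻¹) := by
      rw [dist_comm, hdist]; group
    _ ≤ 4 * c / (wordDist (S : Set G) 1 (g * (h * g₀)) : ℝ) ^ 2 :=
        floydDist_mul_le hsym hgen (by exact_mod_cast (by linarith : (1 : ℝ) ≤ N).trans hqN)
          (by exact_mod_cast (by linarith : (2 * c : ℝ) ≤ N).trans hqN)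
    _ < η / 2 := by
        rw [div_lt_iff₀ (by nlinarith)]
        nlinarith
  exact ⟨h, hh, (dist_triangle _ _ _).trans_lt (by linarith [min_le_left (η / 2) η₂])⟩

end Boundary

theorem undistorted_implies_dynamically_quasiconvex_general
    {G : Type*} [Group G] (S : Finset G)
    (hsym : ∀ s ∈ S, s⁻¹ ∈ S) (hgen : Subgroup.closure (S : Set G) = ⊤)
    {𝔾 : Type*} [MetricSpace 𝔾] [CompactSpace 𝔾]
    (ι : G → 𝔾)
    (hdist : ∀ x y : G, dist (ι x) (ι y) = floydDist (S : Set G) x y)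
    [MulAction G 𝔾]
    (hcont : ∀ g : G, Continuous fun x : 𝔾 => g • x)
    (hext : ∀ g x : G, ι (g * x) = g • ι x)
    (H : Subgroup G) (T : Finset G) (hT : (T : Set G) ⊆ (H : Set G))
    (hund : IsUndistorted (S : Set G) (T : Set G) H) :
    ∀ K L : Set 𝔾, IsClosed K → IsClosed L →
      K ⊆ (Set.range ι)ᶜ → L ⊆ (Set.range ι)ᶜ → Disjoint K L →
      ((fun g : G => (g : G ⧸ H)) ''
        {g : G | ((g • floydLimitSet ι H) ∩ K).Nonempty ∧
                 ((g • floydLimitSet ι H) ∩ L).Nonempty}).Finite := by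
  intro K L hK hL hKι hLι hKL
  obtain ⟨δ, hδ, hδKL⟩ := exists_pos_forall_lt_dist hK.isCompact hL hKL
  obtain ⟨R, hR⟩ := exists_mem_wordDist_one_le_of_le_dist hsym hgen hdist hT
    (fun t ht => Finset.le_sup (f := wordDist (S : Set G) 1) ht) hund (half_pos hδ)
  refine ((finite_setOf_wordDist_one_le S hsym hgen R).image ((↑) : G → G ⧸ H)).subset ?_
  rintro _ ⟨g, ⟨⟨x, hxΛ, hxK⟩, ⟨y, hyΛ, hyL⟩⟩, rfl⟩
  obtain ⟨h, hh, hx⟩ := exists_mem_dist_lt_of_mem_smul_floydLimitSet S hsym hgen hdist hcont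
    hext hxΛ (hKι hxK) (div_pos hδ four_pos)
  obtain ⟨h', hh', hy⟩ := exists_mem_dist_lt_of_mem_smul_floydLimitSet S hsym hgen hdist hcont
    hext hyΛ (hLι hyL) (div_pos hδ four_pos)
  have hxy := hδKL x hxK y hyL
  obtain ⟨k, hk, hkR⟩ := hR g h hh h' hh' (by
    linarith [dist_triangle4 x (ι (g * h)) (ι (g * h')) y, dist_comm x (ι (g * h))])
  exact ⟨g * k, hkR, QuotientGroup.mk_mul_of_mem g hk⟩

/-- if `G` is finitely generated with nontrivial Floyd boundary
`∂G = 𝔾 \ ι(G)` (where `𝔾` is the Floyd completion, a compact complete metric space in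
which `ι(G)` is dense and realizes the Floyd metric, and on which the left-multiplication
action of `G` extends to a convergence action on `∂G`), then every undistorted finitely
generated subgroup `H ≤ G` is dynamically quasiconvex with respect to the action of `G`
on `∂G`. -/
theorem undistorted_implies_dynamically_quasiconvex
    {G : Type*} [Group G] (S : Finset G)
    (hsym : ∀ s ∈ S, s⁻¹ ∈ S) (hgen : Subgroup.closure (S : Set G) = ⊤)
    {𝔾 : Type*} [MetricSpace 𝔾] [CompleteSpace 𝔾] [CompactSpace 𝔾]
    (ι : G → 𝔾)
    (hdist : ∀ x y : G, dist (ι x) (ι y) = floydDist (S : Set G) x y)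
    (hdense : DenseRange ι)
    [MulAction G 𝔾]
    (hcont : ∀ g : G, Continuous fun x : 𝔾 => g • x)
    (hext : ∀ g x : G, ι (g * x) = g • ι x)
    (hnontriv : ∃ a b c : 𝔾, a ∉ Set.range ι ∧ b ∉ Set.range ι ∧ c ∉ Set.range ι ∧
      a ≠ b ∧ a ≠ c ∧ b ≠ c)
    (hconv : ∀ K L : Set (𝔾 × 𝔾 × 𝔾), IsCompact K → IsCompact L →
      (∀ t ∈ K ∪ L, (t.1 ∉ Set.range ι ∧ t.2.1 ∉ Set.range ι ∧ t.2.2 ∉ Set.range ι) ∧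
        (t.1 ≠ t.2.1 ∧ t.1 ≠ t.2.2 ∧ t.2.1 ≠ t.2.2)) →
      {g : G | ((g • K) ∩ L).Nonempty}.Finite)
    (H : Subgroup G) (T : Finset G) (hT : (T : Set G) ⊆ (H : Set G))
    (hTgen : Subgroup.closure (T : Set G) = H)
    (hund : IsUndistorted (S : Set G) (T : Set G) H) :
    ∀ K L : Set 𝔾, IsClosed K → IsClosed L →
      K ⊆ (Set.range ι)ᶜ → L ⊆ (Set.range ι)ᶜ → Disjoint K L →
      ((fun g : G => (g : G ⧸ H)) ''
        {g : G | ((g • floydLimitSet ι H) ∩ K).Nonempty ∧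
                 ((g • floydLimitSet ι H) ∩ L).Nonempty}).Finite :=
  undistorted_implies_dynamically_quasiconvex_general S hsym hgen ι hdist hcont hext H T hT hund
end

section
/- Let G be a group with a convergence group action on a compact metrizable space M with at least three points, and let H be a dynamically quasiconvex subgroup of G with |Λ(H)| ≥ 2. Then for any subgroup J with H ⊆ J ⊆ G satisfying Λ(H) = Λ(J), the subgroup H has finite index in J; in particular, J is dynamically quasiconvex. -/
open Pointwise Filter Topology Set

/-
Since `Λ(J)` is `J`-invariant, `Λ(J) = Λ(H)` gives `j Λ(H) = Λ(H)` for every `j ∈ J`. Taking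
two distinct points `a, b ∈ Λ(H)`, every coset `jH` with `j ∈ J` is one of the finitely many
cosets `gH` with `gΛ(H)` meeting both `{a}` and `{b}`, so `[J : H] < ∞`. Dynamical
quasiconvexity of `J` follows because the cosets `gJ` in question are images of the cosets
`gH` under `G ⧸ H → G ⧸ J`.
-/

theorem Subgroup.relIndex_ne_zero_of_finite_image_mk {G : Type*} [Group G] {H J : Subgroup G}
    (h : ((↑) '' (J : Set G) : Set (G ⧸ H)).Finite) : H.relIndex J ≠ 0 := by
  have hsmul (j : J) : j • ((1 : G) : G ⧸ H) = ((j : G) : G ⧸ H) := by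
    change (j : G) • ((1 : G) : G ⧸ H) = _
    rw [MulAction.Quotient.smul_mk, smul_eq_mul, mul_one]
  have hstab : MulAction.stabilizer J ((1 : G) : G ⧸ H) = H.subgroupOf J := by
    ext j
    rw [MulAction.mem_stabilizer_iff, hsmul, Subgroup.mem_subgroupOf, QuotientGroup.eq]
    simp
  have horbit : MulAction.orbit J ((1 : G) : G ⧸ H) = (↑) '' (J : Set G) := by
    ext x
    simp [MulAction.mem_orbit_iff, hsmul]
  rw [Subgroup.relIndex, ← hstab, MulAction.index_stabilizer, horbit]
  exact ((Set.ncard_pos h).2 ⟨_, 1, J.one_mem, rfl⟩).ne'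

section LimitSet

variable {G M : Type*} [Group G] [TopologicalSpace M] [MulAction G M]

theorem smul_mem_limitSet [ContinuousConstSMul G M] {J : Subgroup G} {j : G} (hj : j ∈ J)
    {x : M} (hx : x ∈ limitSet G M J) : j • x ∈ limitSet G M J := by
  obtain ⟨m, hm⟩ := hx
  refine ⟨m, ?_⟩
  have horbit : j • ((fun h : G => h • m) '' (J : Set G)) ⊆ (fun h : G => h • m) '' J := by
    rintro _ ⟨_, ⟨h, hh, rfl⟩, rfl⟩
    exact ⟨j * h, J.mul_mem hj hh, mul_smul j h m⟩
  have hjx := smul_mem_smul_set (a := j) hm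
  rw [← closure_smul, smul_set_sdiff, smul_set_singleton] at hjx
  exact closure_mono (sdiff_subset_sdiff_left horbit) hjx

theorem smul_limitSet [ContinuousConstSMul G M] {J : Subgroup G} {j : G} (hj : j ∈ J) :
    j • limitSet G M J = limitSet G M J := by
  refine (smul_set_subset_iff.2 fun x hx => smul_mem_limitSet hj hx).antisymm fun x hx => ?_
  rw [mem_smul_set_iff_inv_smul_mem]
  exact smul_mem_limitSet (J.inv_mem hj) hx

theorem DynamicallyQuasiconvex.of_le_of_limitSet_eq {H J : Subgroup G}
    (hH : DynamicallyQuasiconvex G M H) (hHJ : H ≤ J) (hΛ : limitSet G M H = limitSet G M J) :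
    DynamicallyQuasiconvex G M J := by
  intro K L hK hL hKL
  rw [← hΛ]
  convert (hH K L hK hL hKL).image (Subgroup.quotientMapOfLE hHJ) using 1
  rw [image_image]
  rfl

end LimitSet

theorem finite_index_in_subgroup_with_same_limit_set_general
    {G M : Type*} [Group G] [TopologicalSpace M]
    [TopologicalSpace.MetrizableSpace M] [MulAction G M]
    (hconv : IsConvergenceAction G M)
    (H : Subgroup G) (hdqc : DynamicallyQuasiconvex G M H)
    (hΛ : 2 ≤ (limitSet G M H).encard) :
    ∀ J : Subgroup G, H ≤ J → limitSet G M H = limitSet G M J →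
      H.relIndex J ≠ 0 ∧ DynamicallyQuasiconvex G M J := by
  intro J hHJ hΛJ
  have : ContinuousConstSMul G M := ⟨hconv.1⟩
  refine ⟨?_, hdqc.of_le_of_limitSet_eq hHJ hΛJ⟩
  obtain ⟨a, b, ha, hb, hab⟩ := one_lt_encard_iff.mp (lt_of_lt_of_le (by norm_num) hΛ)
  refine Subgroup.relIndex_ne_zero_of_finite_image_mk <|
    (hdqc {a} {b} isClosed_singleton isClosed_singleton (disjoint_singleton.2 hab)).subset <|
      image_mono fun j hj => ?_
  have hjΛ : j • limitSet G M H = limitSet G M H := by rw [hΛJ, smul_limitSet hj]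
  exact ⟨⟨a, hjΛ.symm ▸ ha, rfl⟩, ⟨b, hjΛ.symm ▸ hb, rfl⟩⟩

/-- if `H` is dynamically quasiconvex with `|Λ(H)| ≥ 2`, then any
intermediate subgroup `H ≤ J ≤ G` with the same limit set contains `H` with finite
index, and is itself dynamically quasiconvex. -/
theorem finite_index_in_subgroup_with_same_limit_set
    {G M : Type*} [Group G] [TopologicalSpace M] [CompactSpace M]
    [TopologicalSpace.MetrizableSpace M] [MulAction G M]
    (hconv : IsConvergenceAction G M)
    (h3 : ∃ a b c : M, a ≠ b ∧ a ≠ c ∧ b ≠ c)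
    (H : Subgroup G) (hdqc : DynamicallyQuasiconvex G M H)
    (hΛ : 2 ≤ (limitSet G M H).encard) :
    ∀ J : Subgroup G, H ≤ J → limitSet G M H = limitSet G M J →
      H.relIndex J ≠ 0 ∧ DynamicallyQuasiconvex G M J :=
  finite_index_in_subgroup_with_same_limit_set_general hconv H hdqc hΛ
end

section
/- Let G be a group with a convergence group action on a compact metrizable space M with at least three points, and let H be a dynamically quasiconvex subgroup of G with |Λ(H)| ≥ 2. Then H has finite index in its commensurator in G; in particular, H has finite index in its normalizer in G. -/
open Pointwise Filter Topology Set

/-!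
Passing to a finite-index subgroup does not change the limit set, and `Λ(gHg⁻¹) = gΛ(H)`;
hence every element `g` of the commensurator of `H` satisfies `gΛ(H) = Λ(H)`. For two distinct
points `a, b ∈ Λ(H)`, every such `g` then has `gΛ(H)` meeting both `{a}` and `{b}`, so dynamical
quasiconvexity leaves only finitely many cosets `gH`. The normalizer lies in the commensurator.
-/

open Subgroup

lemma Subgroup.relIndex_ne_zero_of_finite_image {G : Type*} [Group G] {H K : Subgroup G}
    (h : ((↑) '' (K : Set G) : Set (G ⧸ H)).Finite) : H.relIndex K ≠ 0 := by
  have smul_one (k : K) : k • ((1 : G) : G ⧸ H) = ((k : G) : G ⧸ H) := by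
    change (k : G) • ((1 : G) : G ⧸ H) = _
    simp
  have hstab : MulAction.stabilizer K ((1 : G) : G ⧸ H) = H.subgroupOf K := by
    ext k
    rw [MulAction.mem_stabilizer_iff, smul_one, QuotientGroup.eq, mem_subgroupOf]
    simp
  have horbit : MulAction.orbit K ((1 : G) : G ⧸ H) = (↑) '' (K : Set G) := by
    ext; simp [MulAction.mem_orbit_iff, smul_one]
  rw [relIndex, ← hstab, MulAction.index_stabilizer, horbit]
  exact (Set.ncard_pos h).mpr ⟨_, 1, K.one_mem, rfl⟩ |>.ne'

lemma Subgroup.normalizer_le_commensurator {G : Type*} [Group G] (H : Subgroup G) :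
    normalizer (H : Set G) ≤ Commensurable.commensurator H := fun g hg => by
  rw [Commensurable.commensurator_mem_iff, conjAct_pointwise_smul_iff.2 hg]

section LimitSet

variable {G M : Type*} [Group G] [TopologicalSpace M] [MulAction G M]

lemma limitSet_subset_of_relIndex_ne_zero {K H : Subgroup G} (hK : K.relIndex H ≠ 0) :
    limitSet G M H ⊆ limitSet G M K := by
  rintro x ⟨m, hx⟩
  have : Finite (H ⧸ K.subgroupOf H) := index_ne_zero_iff_finite.1 hK
  -- an `H`-orbit is covered by finitely many `K`-orbits, one for each coset of `K ⊓ H` in `H`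
  have hcover : (fun h : G => h • m) '' H \ {x} ⊆
      ⋃ q : H ⧸ K.subgroupOf H, (fun k : G => k • ((q.out : G)⁻¹ • m)) '' K \ {x} := by
    rintro _ ⟨⟨h, hh, rfl⟩, hne⟩
    obtain ⟨k, hk⟩ := QuotientGroup.mk_out_eq_mul (K.subgroupOf H) (⟨h, hh⟩ : H)⁻¹
    refine mem_iUnion.2 ⟨((⟨h, hh⟩ : H)⁻¹ : H), ⟨k, mem_subgroupOf.1 k.2, ?_⟩, hne⟩
    simp [hk, smul_smul]
  obtain ⟨q, hq⟩ := mem_iUnion.1 ((closure_iUnion_of_finite _).subset (closure_mono hcover hx))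
  exact ⟨_, hq⟩

lemma limitSet_eq_of_commensurable {H K : Subgroup G} (hHK : Commensurable H K) :
    limitSet G M H = limitSet G M K :=
  (limitSet_subset_of_relIndex_ne_zero hHK.2).antisymm
    (limitSet_subset_of_relIndex_ne_zero hHK.1)

variable [ContinuousConstSMul G M]

lemma smul_limitSet_subset_limitSet_conjAct (g : G) (H : Subgroup G) :
    g • limitSet G M H ⊆ limitSet G M (ConjAct.toConjAct g • H) := by
  rintro _ ⟨x, ⟨m, hx⟩, rfl⟩
  refine ⟨g • m, ?_⟩
  have hS : g • ((fun h : G => h • m) '' H \ {x}) ⊆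
      (fun h : G => h • g • m) '' (ConjAct.toConjAct g • H : Subgroup G) \ {g • x} := by
    rw [smul_set_sdiff, smul_set_singleton]
    refine sdiff_subset_sdiff_left ?_
    rintro _ ⟨_, ⟨h, hh, rfl⟩, rfl⟩
    have hconj := smul_mem_pointwise_smul h (ConjAct.toConjAct g) H hh
    rw [ConjAct.toConjAct_smul] at hconj
    exact ⟨g * h * g⁻¹, hconj, by simp [smul_smul]⟩
  exact closure_mono hS (smul_closure_subset g _ (smul_mem_smul_set hx))

lemma commensurator_le_stabilizer_limitSet (H : Subgroup G) :
    Commensurable.commensurator H ≤ MulAction.stabilizer G (limitSet G M H) := by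
  have hsub (g : G) (hg : g ∈ Commensurable.commensurator H) :
      g • limitSet G M H ⊆ limitSet G M H :=
    (smul_limitSet_subset_limitSet_conjAct g H).trans (limitSet_eq_of_commensurable hg).le
  intro g hg
  exact (hsub g hg).antisymm (subset_smul_set_iff.2 (hsub g⁻¹ (inv_mem hg)))

end LimitSet

theorem DynamicallyQuasiconvex.relIndex_stabilizer_limitSet_ne_zero {G M : Type*} [Group G]
    [TopologicalSpace M] [T1Space M] [MulAction G M] {H : Subgroup G}
    (hH : DynamicallyQuasiconvex G M H) (hΛ : 2 ≤ (limitSet G M H).encard) :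
    H.relIndex (MulAction.stabilizer G (limitSet G M H)) ≠ 0 := by
  obtain ⟨a, b, ha, hb, hab⟩ := one_lt_encard_iff.1 (lt_of_lt_of_le (by norm_num) hΛ)
  refine relIndex_ne_zero_of_finite_image <| (hH {a} {b} isClosed_singleton isClosed_singleton
    (disjoint_singleton.2 hab)).subset (image_mono fun g hg => ?_)
  rw [SetLike.mem_coe, MulAction.mem_stabilizer_iff] at hg
  rw [mem_ofPred_eq, hg]
  exact ⟨⟨a, ha, rfl⟩, ⟨b, hb, rfl⟩⟩

theorem finite_index_in_commensurator_general
    {G M : Type*} [Group G] [TopologicalSpace M]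
    [TopologicalSpace.MetrizableSpace M] [MulAction G M]
    (hconv : IsConvergenceAction G M)
    (H : Subgroup G) (hdqc : DynamicallyQuasiconvex G M H)
    (hΛ : 2 ≤ (limitSet G M H).encard) :
    H.relIndex (Subgroup.Commensurable.commensurator H) ≠ 0 ∧
      H.relIndex (Subgroup.normalizer (H : Set G)) ≠ 0 := by
  have : ContinuousConstSMul G M := ⟨hconv.1⟩
  have hcomm : H.relIndex (Commensurable.commensurator H) ≠ 0 :=
    mt (relIndex_eq_zero_of_le_right (commensurator_le_stabilizer_limitSet H))
      (hdqc.relIndex_stabilizer_limitSet_ne_zero hΛ)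
  exact ⟨hcomm, mt (relIndex_eq_zero_of_le_right (normalizer_le_commensurator H)) hcomm⟩

/-- a dynamically quasiconvex subgroup with at least two limit points has
finite index in its commensurator, and in particular in its normalizer. -/
theorem finite_index_in_commensurator
    {G M : Type*} [Group G] [TopologicalSpace M] [CompactSpace M]
    [TopologicalSpace.MetrizableSpace M] [MulAction G M]
    (hconv : IsConvergenceAction G M)
    (h3 : ∃ a b c : M, a ≠ b ∧ a ≠ c ∧ b ≠ c)
    (H : Subgroup G) (hdqc : DynamicallyQuasiconvex G M H)
    (hΛ : 2 ≤ (limitSet G M H).encard) :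
    H.relIndex (Subgroup.Commensurable.commensurator H) ≠ 0 ∧
      H.relIndex (Subgroup.normalizer (H : Set G)) ≠ 0 :=
  finite_index_in_commensurator_general hconv H hdqc hΛ
end

section
/- Let G be a group with a convergence group action on a compact metrizable space M with at least three points, let z ∈ M be a point whose stabilizer Stab_G(z) contains no loxodromic element, let H_z and J_z be subgroups of Stab_G(z), and let K and L be compact subsets of M \ {z}. Then the set { j⁻¹h : h ∈ H_z, j ∈ J_z, (j⁻¹h)(K) ∩ L ≠ ∅ } is finite. -/
open Pointwise Filter Topology Set

/-! If the set were infinite, fix a non-principal ultrafilter `𝒰` on it and call `(p, q)` a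
limit pair when some `p_g → p` has `g • p_g → q` along `𝒰`. The convergence property forbids
three limit pairs with pairwise distinct sources and pairwise distinct targets. Since `(z, z)`
and some `(x, y)` with `x, y ≠ z` are limit pairs, this matching condition alone forces `𝒰`
to attract everything off `z` to `y`, or (for the inverses) everything off `z` to `x`. Either
way some element of `Stab_G(z)` maps a closed set `U ∌ z` into itself and some point outside
`U` into `U`. Such an element has infinite order, a fixed point in `U` (again by the
convergence property), and at most two fixed points, so it is loxodromic. -/

def distinctTriples (M : Type*) : Set (M × M × M) :=
  {t | t.1 ≠ t.2.1 ∧ t.1 ≠ t.2.2 ∧ t.2.1 ≠ t.2.2}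

def NoTripleMatching {α : Type*} (R : α → α → Prop) : Prop :=
  ∀ ⦃p₁ q₁ p₂ q₂ p₃ q₃⦄, R p₁ q₁ → R p₂ q₂ → R p₃ q₃ →
    p₁ ≠ p₂ → p₁ ≠ p₃ → p₂ ≠ p₃ → q₁ ≠ q₂ → q₁ ≠ q₃ → q₂ ≠ q₃ → False

lemma exists_ne_ne_of_three {α : Type*} (h3 : ∃ a b c : α, a ≠ b ∧ a ≠ c ∧ b ≠ c) (u v : α) :
    ∃ w, w ≠ u ∧ w ≠ v := by
  obtain ⟨a, b, c, hab, hac, hbc⟩ := h3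
  by_contra! h
  have key (w : α) : w = u ∨ w = v := or_iff_not_imp_left.2 (h w)
  rcases key a with rfl | rfl <;> rcases key b with rfl | rfl <;>
    rcases key c with rfl | rfl <;> simp_all

namespace NoTripleMatching

variable {α : Type*} {R : α → α → Prop}

lemma eq_of_rel_of_ne (hR : NoTripleMatching R) (hsurj : ∀ q, ∃ p, R p q)
    (h3 : ∃ a b c : α, a ≠ b ∧ a ≠ c ∧ b ≠ c) {a₁ a₂ b c d : α}
    (h₁ : R a₁ c) (h₂ : R a₂ c) (ha : a₁ ≠ a₂) (hb : R b d) (hb₁ : b ≠ a₁) (hb₂ : b ≠ a₂)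
    (hdc : d ≠ c) {p q : α} (hpq : R p q) (hpb : p ≠ b) : q = c := by
  by_contra hqc
  have hqd : q = d := by
    by_contra hqd
    have hpa₁ : p = a₁ := by
      by_contra hpa₁
      exact hR hpq h₁ hb hpa₁ hpb hb₁.symm hqc hqd hdc.symm
    have hpa₂ : p = a₂ := by
      by_contra hpa₂
      exact hR hpq h₂ hb hpa₂ hpb hb₂.symm hqc hqd hdc.symm
    exact ha (hpa₁.symm.trans hpa₂)
  subst hqd
  obtain ⟨t, htc, htq⟩ := exists_ne_ne_of_three h3 c q
  obtain ⟨e, he⟩ := hsurj t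
  have heb : e = b := by
    by_contra heb
    have hea₁ : e = a₁ := by
      by_contra hea₁
      exact hR he h₁ hb hea₁ heb hb₁.symm htc htq hdc.symm
    have hea₂ : e = a₂ := by
      by_contra hea₂
      exact hR he h₂ hb hea₂ heb hb₂.symm htc htq hdc.symm
    exact ha (hea₁.symm.trans hea₂)
  subst heb
  obtain ⟨a, ha, hap, hae⟩ : ∃ a, R a c ∧ a ≠ p ∧ a ≠ e := by
    by_cases hpa₁ : a₁ = p
    · exact ⟨a₂, h₂, fun h => ha (hpa₁.trans h.symm), hb₂.symm⟩
    · exact ⟨a₁, h₁, hpa₁, hb₁.symm⟩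
  exact hR he hpq ha hpb.symm hae.symm hap.symm htq htc hqc

lemma dichotomy (hR : NoTripleMatching R) (htot : ∀ p, ∃ q, R p q) (hsurj : ∀ q, ∃ p, R p q)
    (h3 : ∃ a b c : α, a ≠ b ∧ a ≠ c ∧ b ≠ c) {x y z : α} (hz : R z z) (hxy : R x y)
    (hxz : x ≠ z) (hyz : y ≠ z) :
    (∀ p q, R p q → p ≠ z → q = y) ∨ (∀ p q, R p q → p ≠ x → q = z) := by
  obtain ⟨w, hwz, hwx⟩ := exists_ne_ne_of_three h3 z x
  obtain ⟨a, ha⟩ := htot w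
  have haz : a = z ∨ a = y := by
    by_contra! h
    exact hR hz hxy ha hxz.symm hwz.symm hwx.symm hyz.symm (Ne.symm h.1) (Ne.symm h.2)
  rcases haz with rfl | rfl
  · exact Or.inr fun p q hpq hpx =>
      hR.eq_of_rel_of_ne hsurj h3 hz ha hwz.symm hxy hxz hwx.symm hyz hpq hpx
  · exact Or.inl fun p q hpq hpz =>
      hR.eq_of_rel_of_ne hsurj h3 hxy ha hwx.symm hz hxz.symm hwz.symm hyz.symm hpq hpz

end NoTripleMatching

lemma Set.MapsTo.pow_smul {G M : Type*} [Monoid G] [MulAction G M] {g : G} {U : Set M}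
    (hmaps : MapsTo (g • ·) U U) (n : ℕ) : MapsTo (g ^ n • ·) U U := by
  simpa only [smul_iterate] using hmaps.iterate n

lemma not_isOfFinOrder_of_mapsTo {G M : Type*} [Group G] [MulAction G M] {g : G} {U : Set M}
    (hmaps : MapsTo (g • ·) U U) {w : M} (hw : w ∉ U) (hgw : g • w ∈ U) : ¬ IsOfFinOrder g := by
  intro hfin
  obtain ⟨n, hn, hgn⟩ := isOfFinOrder_iff_pow_eq_one.1 hfin
  have hmem : g ^ (n - 1) • g • w ∈ U := hmaps.pow_smul (n - 1) hgw
  rw [smul_smul, ← pow_succ, Nat.sub_add_cancel hn, hgn, one_smul] at hmem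
  exact hw hmem


lemma Ultrafilter.exists_tendsto_nhds {M : Type*} [TopologicalSpace M] [CompactSpace M]
    {ι : Type*} (𝒰 : Ultrafilter ι)
    (f : ι → M) : ∃ x, Tendsto f 𝒰 (𝓝 x) :=
  ⟨_, Ultrafilter.le_nhds_lim (𝒰.map f)⟩

section Dynamics

variable {G M : Type*} [Group G] [TopologicalSpace M] [MulAction G M]

lemma isOpen_distinctTriples [T2Space M] : IsOpen (distinctTriples M) :=
  (isOpen_ne_fun continuous_fst (by fun_prop)).inter
    ((isOpen_ne_fun continuous_fst (by fun_prop)).inter (isOpen_ne_fun (by fun_prop) (by fun_prop)))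

def IsLimitPair {ι : Type*} (l : Filter ι) (γ : ι → G) (p q : M) : Prop :=
  ∃ f : ι → M, Tendsto f l (𝓝 p) ∧ Tendsto (fun i => γ i • f i) l (𝓝 q)

lemma IsLimitPair.of_inv {ι : Type*} {l : Filter ι} {γ : ι → G} {p q : M}
    (h : IsLimitPair l (fun i => (γ i)⁻¹) q p) : IsLimitPair l γ p q := by
  obtain ⟨f, hf, hγf⟩ := h
  exact ⟨fun i => (γ i)⁻¹ • f i, hγf, by simpa only [smul_inv_smul] using hf⟩

section Ultralimits

variable [CompactSpace M] {ι : Type*} (𝒰 : Ultrafilter ι) (γ : ι → G)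

lemma exists_isLimitPair_right (p : M) : ∃ q, IsLimitPair 𝒰 γ p q :=
  (𝒰.exists_tendsto_nhds fun i => γ i • p).imp fun _ hq => ⟨fun _ => p, tendsto_const_nhds, hq⟩

lemma exists_isLimitPair_left (q : M) : ∃ p, IsLimitPair 𝒰 γ p q :=
  (𝒰.exists_tendsto_nhds fun i => (γ i)⁻¹ • q).imp fun _ hp =>
    ⟨fun i => (γ i)⁻¹ • q, hp, by simpa only [smul_inv_smul] using tendsto_const_nhds⟩

lemma eventually_mapsTo_of_isLimitPair {z t : M}
    (hatt : ∀ p q, IsLimitPair 𝒰 γ p q → p ≠ z → q = t) {C U : Set M} (hC : IsClosed C)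
    (hzC : z ∉ C) (hU : U ∈ 𝓝 t) : ∀ᶠ i in 𝒰, MapsTo (γ i • ·) C U := by
  by_contra hmaps
  have hbad : ∀ i, ∃ v, ¬ MapsTo (γ i • ·) C U → v ∈ C ∧ γ i • v ∉ U := fun i => by
    by_cases hi : MapsTo (γ i • ·) C U
    · exact ⟨z, fun h => (h hi).elim⟩
    · obtain ⟨v, hv, hvU⟩ := not_forall₂.1 hi
      exact ⟨v, fun _ => ⟨hv, hvU⟩⟩
  choose f hf using hbad
  have hev : ∀ᶠ i in 𝒰, f i ∈ C ∧ γ i • f i ∉ U :=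
    (Ultrafilter.eventually_not.2 hmaps).mono fun i hi => hf i hi
  obtain ⟨p, hp⟩ := 𝒰.exists_tendsto_nhds f
  obtain ⟨q, hq⟩ := 𝒰.exists_tendsto_nhds fun i => γ i • f i
  have hpC : p ∈ C := hC.mem_of_tendsto hp (hev.mono fun _ hi => hi.1)
  have hqt : q = t := hatt p q ⟨f, hp, hq⟩ fun h => hzC (h ▸ hpC)
  obtain ⟨i, hiU, hi⟩ := (((hqt ▸ hq).eventually_mem hU).and hev).exists
  exact hi.2 hiU

end Ultralimits

variable [CompactSpace M] [T2Space M]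

namespace IsConvergenceAction

variable (hconv : IsConvergenceAction G M)
include hconv

lemma not_tendsto_distinctTriples {ι : Type*} {l : Filter ι} [l.NeBot] {γ : ι → G}
    (hγ : Tendsto γ l cofinite) {T : ι → M × M × M} {t t' : M × M × M}
    (ht : t ∈ distinctTriples M) (ht' : t' ∈ distinctTriples M) (hT : Tendsto T l (𝓝 t))
    (hT' : Tendsto (fun i => γ i • T i) l (𝓝 t')) : False := by
  obtain ⟨K, hK, hKc, hKD⟩ :=
    exists_mem_nhds_isClosed_subset (isOpen_distinctTriples.mem_nhds ht)
  obtain ⟨L, hL, hLc, hLD⟩ :=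
    exists_mem_nhds_isClosed_subset (isOpen_distinctTriples.mem_nhds ht')
  have hfin := hconv.2 K L hKc.isCompact hLc.isCompact fun s hs =>
    hs.elim (fun h => hKD h) (fun h => hLD h)
  have hmeet : ∀ᶠ i in l, ((γ i • K) ∩ L).Nonempty :=
    ((hT.eventually_mem hK).and (hT'.eventually_mem hL)).mono fun _ hi =>
      ⟨_, smul_mem_smul_set hi.1, hi.2⟩
  obtain ⟨i, hi, hiF⟩ := (hmeet.and (hγ hfin.compl_mem_cofinite)).exists
  exact hiF hi

lemma noTripleMatching_isLimitPair {ι : Type*} {l : Filter ι} [l.NeBot] {γ : ι → G}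
    (hγ : Tendsto γ l cofinite) : NoTripleMatching (IsLimitPair (M := M) l γ) := by
  rintro p₁ q₁ p₂ q₂ p₃ q₃ ⟨f₁, hf₁, hγf₁⟩ ⟨f₂, hf₂, hγf₂⟩ ⟨f₃, hf₃, hγf₃⟩
    h₁₂ h₁₃ h₂₃ h₁₂' h₁₃' h₂₃'
  exact hconv.not_tendsto_distinctTriples hγ ⟨h₁₂, h₁₃, h₂₃⟩ ⟨h₁₂', h₁₃', h₂₃'⟩
    (hf₁.prodMk_nhds (hf₂.prodMk_nhds hf₃)) (hγf₁.prodMk_nhds (hγf₂.prodMk_nhds hγf₃))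

lemma eq_or_eq_or_eq_of_smul_eq_self {g : G} (hg : ¬ IsOfFinOrder g) {a b c : M}
    (ha : g • a = a) (hb : g • b = b) (hc : g • c = c) : a = b ∨ a = c ∨ b = c := by
  by_contra! h
  have hfix (n : ℕ) : g ^ n • (a, b, c) = (a, b, c) := by
    simp only [Prod.smul_mk, MulAction.mem_stabilizer_iff.1 (Subgroup.pow_mem _ ha n),
      MulAction.mem_stabilizer_iff.1 (Subgroup.pow_mem _ hb n),
      MulAction.mem_stabilizer_iff.1 (Subgroup.pow_mem _ hc n)]
  exact hconv.not_tendsto_distinctTriples (l := cofinite) (t := (a, b, c)) (t' := (a, b, c))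
    (injective_pow_iff_not_isOfFinOrder.2 hg).tendsto_cofinite h h tendsto_const_nhds
    (by simpa only [hfix] using tendsto_const_nhds)

/-- With `z ∉ U` fixed, the orbit `gⁿ • u` and its shift `gⁿ • g • u` give limit pairs
`(u, α)` and `(g • u, g • α)` besides `(z, z)`; so `u` or its limit `α` is fixed. -/
lemma exists_smul_eq_self_of_mapsTo {g : G} (hg : ¬ IsOfFinOrder g) {z : M} (hz : g • z = z)
    {U : Set M} (hU : IsClosed U) (hzU : z ∉ U) (hmaps : MapsTo (g • ·) U U) {u : M}
    (hu : u ∈ U) : ∃ β ∈ U, g • β = β := by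
  by_contra! hfree
  have hγ : Tendsto (fun n : ℕ => g ^ n) (hyperfilter ℕ) cofinite :=
    (injective_pow_iff_not_isOfFinOrder.2 hg).tendsto_cofinite.mono_left hyperfilter_le_cofinite
  obtain ⟨α, hα⟩ := (hyperfilter ℕ).exists_tendsto_nhds fun n => g ^ n • u
  have hαU : α ∈ U := hU.mem_of_tendsto hα <| Eventually.of_forall fun n => hmaps.pow_smul n hu
  have hcomm (n : ℕ) : g ^ n • g • u = g • g ^ n • u := by
    rw [smul_smul, smul_smul, ← pow_succ, ← pow_succ']
  have hgα : Tendsto (fun n => g ^ n • g • u) (hyperfilter ℕ) (𝓝 (g • α)) := by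
    simpa only [Function.comp_def, hcomm] using ((hconv.1 g).tendsto α).comp hα
  have hzz : Tendsto (fun n => g ^ n • z) (hyperfilter ℕ) (𝓝 z) := by
    simpa only [MulAction.mem_stabilizer_iff.1 (Subgroup.pow_mem _ hz _)] using tendsto_const_nhds
  have hzne {v : M} (hv : v ∈ U) : z ≠ v := fun h => hzU (h ▸ hv)
  exact hconv.noTripleMatching_isLimitPair hγ ⟨fun _ => z, tendsto_const_nhds, hzz⟩
    ⟨fun _ => u, tendsto_const_nhds, hα⟩ ⟨fun _ => g • u, tendsto_const_nhds, hgα⟩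
    (hzne hu) (hzne (hmaps hu)) (hfree u hu).symm (hzne hαU) (hzne (hmaps hαU))
    (hfree α hαU).symm

lemma isLoxodromic_of_mapsTo {g : G} {z : M} (hz : g • z = z) {U : Set M} (hU : IsClosed U)
    (hzU : z ∉ U) (hmaps : MapsTo (g • ·) U U) {w : M} (hw : w ∉ U) (hgw : g • w ∈ U) :
    IsLoxodromic G M g := by
  have hg := not_isOfFinOrder_of_mapsTo hmaps hw hgw
  obtain ⟨β, hβU, hβ⟩ := hconv.exists_smul_eq_self_of_mapsTo hg hz hU hzU hmaps hgw
  have hzβ : z ≠ β := fun h => hzU (h ▸ hβU)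
  have hfix : {x : M | g • x = x} = {z, β} := by
    ext t
    simp only [mem_ofPred_eq, mem_insert_iff, mem_singleton_iff]
    constructor
    · intro ht
      rcases hconv.eq_or_eq_or_eq_of_smul_eq_self hg ht hz hβ with h | h | h
      exacts [Or.inl h, Or.inr h, absurd h hzβ]
    · rintro (rfl | rfl) <;> assumption
  exact ⟨hg, by rw [hfix, encard_pair hzβ]⟩

lemma exists_isLoxodromic_of_attracting (h3 : ∃ a b c : M, a ≠ b ∧ a ≠ c ∧ b ≠ c)
    {ι : Type*} (𝒰 : Ultrafilter ι) {γ : ι → G} {z t : M} (hz : ∀ᶠ i in 𝒰, γ i • z = z)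
    (htz : t ≠ z) (hatt : ∀ p q, IsLimitPair 𝒰 γ p q → p ≠ z → q = t) :
    ∃ g : G, g • z = z ∧ IsLoxodromic G M g := by
  obtain ⟨w, hwz, hwt⟩ := exists_ne_ne_of_three h3 z t
  obtain ⟨U, hU, hUc, hUzw⟩ := exists_mem_nhds_isClosed_subset <|
    (toFinite {z, w}).isClosed.isOpen_compl.mem_nhds (x := t) (by simp [htz, hwt.symm])
  have hzU : z ∉ U := fun h => hUzw h (mem_insert z {w})
  have hwU : w ∉ U := fun h => hUzw h (mem_insert_of_mem z rfl)
  have hmaps := eventually_mapsTo_of_isLimitPair 𝒰 γ hatt (isClosed_singleton.union hUc)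
    (C := {w} ∪ U) (by simp [hzU, hwz.symm]) hU
  obtain ⟨i, hi, hiz⟩ := (hmaps.and hz).exists
  exact ⟨γ i, hiz, hconv.isLoxodromic_of_mapsTo hiz hUc hzU (hi.mono_left subset_union_right)
    hwU (hi (Or.inl rfl))⟩

lemma exists_isLoxodromic_of_isLimitPair (h3 : ∃ a b c : M, a ≠ b ∧ a ≠ c ∧ b ≠ c)
    {ι : Type*} (𝒰 : Ultrafilter ι) {γ : ι → G} (hγ : Tendsto γ 𝒰 cofinite) {x y z : M}
    (hz : ∀ᶠ i in 𝒰, γ i • z = z) (hxy : IsLimitPair 𝒰 γ x y) (hxz : x ≠ z) (hyz : y ≠ z) :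
    ∃ g : G, g • z = z ∧ IsLoxodromic G M g := by
  have hzz : IsLimitPair 𝒰 γ z z :=
    ⟨fun _ => z, tendsto_const_nhds, tendsto_const_nhds.congr' (hz.mono fun _ hi => hi.symm)⟩
  rcases (hconv.noTripleMatching_isLimitPair hγ).dichotomy (exists_isLimitPair_right 𝒰 γ)
    (exists_isLimitPair_left 𝒰 γ) h3 hzz hxy hxz hyz with hatt | hrep
  · exact hconv.exists_isLoxodromic_of_attracting h3 𝒰 hz hyz hatt
  · exact hconv.exists_isLoxodromic_of_attracting h3 𝒰 (γ := fun i => (γ i)⁻¹)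
      (hz.mono fun _ hi => inv_smul_eq_iff.2 hi.symm) hxz
      fun q p hqp hqz => by_contra fun hpx => hqz (hrep p q hqp.of_inv hpx)

end IsConvergenceAction

end Dynamics

/-- if the stabilizer of `z` contains no loxodromic element, `H_z, J_z` are
subgroups of `Stab_G(z)`, and `K, L` are compact subsets of `M \ {z}`, then only
finitely many elements `j⁻¹h` (with `h ∈ H_z`, `j ∈ J_z`) move `K` to meet `L`. -/
theorem finitely_many_translates_meeting
    {G M : Type*} [Group G] [TopologicalSpace M] [CompactSpace M]
    [TopologicalSpace.MetrizableSpace M] [MulAction G M]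
    (hconv : IsConvergenceAction G M)
    (h3 : ∃ a b c : M, a ≠ b ∧ a ≠ c ∧ b ≠ c)
    (z : M)
    (hnolox : ∀ g ∈ MulAction.stabilizer G z, ¬ IsLoxodromic G M g)
    (Hz Jz : Subgroup G)
    (hHz : Hz ≤ MulAction.stabilizer G z) (hJz : Jz ≤ MulAction.stabilizer G z)
    (K L : Set M) (hK : IsCompact K) (hL : IsCompact L)
    (hKz : K ⊆ {z}ᶜ) (hLz : L ⊆ {z}ᶜ) :
    {g : G | (∃ h ∈ Hz, ∃ j ∈ Jz, g = j⁻¹ * h) ∧ ((g • K) ∩ L).Nonempty}.Finite := by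
  set S := {g : G | (∃ h ∈ Hz, ∃ j ∈ Jz, g = j⁻¹ * h) ∧ ((g • K) ∩ L).Nonempty}
  by_contra hinf
  have : Infinite S := infinite_coe_iff.2 hinf
  have hγ : Tendsto ((↑) : S → G) (hyperfilter S) cofinite :=
    Subtype.val_injective.tendsto_cofinite.mono_left hyperfilter_le_cofinite
  have hSz (g : S) : (g : G) • z = z := by
    obtain ⟨⟨h, hh, j, hj, hg⟩, -⟩ := g.2
    rw [hg]
    exact Subgroup.mul_mem _ (Subgroup.inv_mem _ (hJz hj)) (hHz hh)
  have hmeet (g : S) : ∃ k ∈ K, (g : G) • k ∈ L := by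
    obtain ⟨-, _, ⟨k, hk, rfl⟩, hkL⟩ := g.2
    exact ⟨k, hk, hkL⟩
  choose f hfK hfL using hmeet
  obtain ⟨x, hxK, hx⟩ := hK.ultrafilter_le_nhds ((hyperfilter S).map f)
    (le_principal_iff.2 (Filter.mem_map.2 (univ_mem' hfK)))
  obtain ⟨y, hyL, hy⟩ := hL.ultrafilter_le_nhds ((hyperfilter S).map fun g : S => (g : G) • f g)
    (le_principal_iff.2 (Filter.mem_map.2 (univ_mem' hfL)))
  obtain ⟨g, hgz, hg⟩ := hconv.exists_isLoxodromic_of_isLimitPair h3 (hyperfilter S) hγ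
    (Eventually.of_forall hSz) ⟨f, hx, hy⟩ (hKz hxK) (hLz hyL)
  exact hnolox g hgz hg
end
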